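/- A weight w belongs to A^{ρ,∞}_1 = ⋃_{θ>0} A^{ρ,θ}_1 if and only if there exists θ > 0 and a constant C > 0 such that M_{ρ,θ} w(x) ≤ C w(x) for almost every x ∈ ℝ^d, where M_{ρ,θ} f(x) = sup_{r>0} (1 + r/ρ(x))^{−θ} (1/|B(x,r)|) ∫_{B(x,r)} |f(y)| dy. -/
import Mathlib

open MeasureTheory Metric Real

noncomputable section

-- aux: on a nonzero measure, any real function is coboundedUnder (· ≥ ·) w.r.t. the ae filter
lemma aux_cobdd {α : Type*} {m : MeasurableSpace α} {μ : Measure α} (hμ : μ ≠ 0) (f : α → ℝ) :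
    Filter.IsCoboundedUnder (· ≥ ·) (ae μ) f := by
  haveI : (ae μ).NeBot := ae_neBot.mpr hμ
  by_contra h
  simp only [Filter.IsCoboundedUnder, Filter.IsCobounded, Filter.eventually_map, not_exists,
    not_forall, ge_iff_le, Classical.not_imp, not_le] at h
  choose a h1 h2 using h
  have hall : ∀ᵐ x ∂μ, ∀ n : ℕ, a n ≤ f x := ae_all_iff.mpr fun n => h1 n
  obtain ⟨x, hx⟩ := hall.exists
  obtain ⟨n, hn⟩ := exists_nat_gt (f x)
  have := hx n
  have := h2 (n : ℝ)
  linarith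

lemma aux_le_essInf {α : Type*} {m : MeasurableSpace α} {μ : Measure α} (hμ : μ ≠ 0)
    {f : α → ℝ} {c : ℝ} (h : ∀ᵐ x ∂μ, c ≤ f x) : c ≤ essInf f μ := by
  haveI : (ae μ).NeBot := ae_neBot.mpr hμ
  exact Filter.le_liminf_of_le (aux_cobdd hμ f) h

lemma aux_essInf_le {α : Type*} {m : MeasurableSpace α} {μ : Measure α}
    {f : α → ℝ} (hf : ∀ x, 0 ≤ f x) : ∀ᵐ x ∂μ, essInf f μ ≤ f x :=
  ae_essInf_le (Filter.isBoundedUnder_of ⟨0, fun x => hf x⟩)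

theorem stmt17 (d : ℕ) (ρ : EuclideanSpace ℝ (Fin d) → ℝ) (hρ : ∀ x, 0 < ρ x)
    (C₀ N₀ : ℝ) (hC₀ : 0 < C₀) (hN₀ : 1 ≤ N₀)
    (hcomp : ∀ x y, C₀⁻¹ * (1 + dist x y / ρ x) ^ (-N₀) ≤ ρ y / ρ x ∧
      ρ y / ρ x ≤ C₀ * (1 + dist x y / ρ x) ^ (N₀ / (N₀ + 1)))
    (w : EuclideanSpace ℝ (Fin d) → ℝ) (hw : ∀ x, 0 ≤ w x)
    (hloc : LocallyIntegrable w) :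
    -- `w ∈ A^{ρ,∞}_1` iff `M_{ρ,θ} w ≤ C w` a.e. for some `θ > 0`
    (∃ θ > (0:ℝ), ∃ C > (0:ℝ), ∀ (x₀ : EuclideanSpace ℝ (Fin d)) (r : ℝ), 0 < r →
        (volume (ball x₀ r)).toReal⁻¹ * ∫ x in ball x₀ r, w x ≤
          C * (1 + r / ρ x₀) ^ θ * essInf w (volume.restrict (ball x₀ r))) ↔
    (∃ θ > (0:ℝ), ∃ C > (0:ℝ), ∀ᵐ x ∂(volume : Measure (EuclideanSpace ℝ (Fin d))),
        ∀ r : ℝ, 0 < r →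
          (1 + r / ρ x) ^ (-θ) *
            ((volume (ball x r)).toReal⁻¹ * ∫ y in ball x r, w y) ≤ C * w x) := by
  set n := Module.finrank ℝ (EuclideanSpace ℝ (Fin d)) with hn
  -- basic positivity
  have hApos : ∀ (x : EuclideanSpace ℝ (Fin d)) (r : ℝ), 0 < r → (1:ℝ) ≤ 1 + r / ρ x := by
    intro x r hr
    have := hρ x
    have : 0 < r / ρ x := by positivity
    linarith
  have hvpos : ∀ (x : EuclideanSpace ℝ (Fin d)) (r : ℝ), 0 < r → 0 < (volume (ball x r)).toReal := by
    intro x r hr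
    exact ENNReal.toReal_pos (measure_ball_pos volume x hr).ne' measure_ball_lt_top.ne
  have hintnn : ∀ (s : Set (EuclideanSpace ℝ (Fin d))), 0 ≤ ∫ x in s, w x := by
    intro s
    exact integral_nonneg fun x => hw x
  -- average comparison for nested balls
  have avg_le : ∀ (x₀ q : EuclideanSpace ℝ (Fin d)) (r s : ℝ), 0 < r → 0 < s → s ≤ 2*r → ball x₀ r ⊆ ball q s →
      (volume (ball x₀ r)).toReal⁻¹ * ∫ x in ball x₀ r, w x ≤
        2^n * ((volume (ball q s)).toReal⁻¹ * ∫ x in ball q s, w x) := by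
    intro x₀ q r s hr hs hsr hsub
    have hfi : IntegrableOn w (ball q s) volume :=
      (hloc.integrableOn_isCompact (isCompact_closedBall q s)).mono_set ball_subset_closedBall
    have hint : ∫ x in ball x₀ r, w x ≤ ∫ x in ball q s, w x :=
      setIntegral_mono_set hfi (Filter.Eventually.of_forall fun x => hw x)
        (HasSubset.Subset.eventuallyLE hsub)
    have hb : (volume (ball q s)).toReal ≤ 2^n * (volume (ball x₀ r)).toReal := by
      rw [Measure.addHaar_ball_of_pos volume q hs, Measure.addHaar_ball_of_pos volume x₀ hr,
        ENNReal.toReal_mul, ENNReal.toReal_mul, ENNReal.toReal_ofReal (by positivity),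
        ENNReal.toReal_ofReal (by positivity)]
      have h1 : s^n ≤ 2^n * r^n := by
        calc s^n ≤ (2*r)^n := pow_le_pow_left₀ hs.le hsr n
        _ = 2^n * r^n := mul_pow 2 r n
      have h01 : 0 ≤ (volume (ball (0:EuclideanSpace ℝ (Fin d)) 1)).toReal := ENNReal.toReal_nonneg
      calc s ^ n * (volume (ball (0:EuclideanSpace ℝ (Fin d)) 1)).toReal
          ≤ (2^n * r^n) * (volume (ball (0:EuclideanSpace ℝ (Fin d)) 1)).toReal := mul_le_mul_of_nonneg_right h1 h01
        _ = 2 ^ n * (r ^ n * (volume (ball (0:EuclideanSpace ℝ (Fin d)) 1)).toReal) := by ring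
    have h1 := hvpos x₀ r hr
    have h2 := hvpos q s hs
    have hI2 : 0 ≤ (volume (ball q s)).toReal⁻¹ * ∫ x in ball q s, w x := by
      have := hintnn (ball q s); positivity
    rw [inv_mul_le_iff₀ h1]
    calc ∫ x in ball x₀ r, w x ≤ ∫ x in ball q s, w x := hint
      _ = (volume (ball q s)).toReal *
            ((volume (ball q s)).toReal⁻¹ * ∫ x in ball q s, w x) := by
          field_simp
      _ ≤ (2^n * (volume (ball x₀ r)).toReal) *
            ((volume (ball q s)).toReal⁻¹ * ∫ x in ball q s, w x) :=
          mul_le_mul_of_nonneg_right hb hI2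
      _ = (volume (ball x₀ r)).toReal *
            (2^n * ((volume (ball q s)).toReal⁻¹ * ∫ x in ball q s, w x)) := by ring
  -- key geometric estimate
  have key : ∀ (x q : EuclideanSpace ℝ (Fin d)) (r s : ℝ), 0 < r → dist x q ≤ r → 0 < s → s ≤ 2*r →
      1 + s / ρ q ≤ (1 + 2*C₀) * (1 + r / ρ x) ^ (N₀+1) := by
    intro x q r s hr hdist hs hsr
    set A := 1 + r / ρ x with hA
    have hx := hρ x
    have hq := hρ q
    have hA1 : (1:ℝ) ≤ A := hApos x r hr
    have hA0 : (0:ℝ) < A := by linarith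
    have h1 : (1:ℝ) ≤ 1 + dist x q / ρ x := by
      have : 0 ≤ dist x q / ρ x := by positivity
      linarith
    have hdA : 1 + dist x q / ρ x ≤ A := by
      rw [hA]; gcongr
    have hpow : A ^ (-N₀) ≤ (1 + dist x q / ρ x) ^ (-N₀) :=
      rpow_le_rpow_of_nonpos (by linarith) hdA (by linarith)
    have hcomp1 := (hcomp x q).1
    have hρq : ρ x * (C₀⁻¹ * A ^ (-N₀)) ≤ ρ q := by
      have h2 : C₀⁻¹ * A ^ (-N₀) ≤ ρ q / ρ x := by
        calc C₀⁻¹ * A ^ (-N₀) ≤ C₀⁻¹ * (1 + dist x q / ρ x) ^ (-N₀) :=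
              mul_le_mul_of_nonneg_left hpow (by positivity)
          _ ≤ ρ q / ρ x := hcomp1
      calc ρ x * (C₀⁻¹ * A ^ (-N₀)) ≤ ρ x * (ρ q / ρ x) :=
            mul_le_mul_of_nonneg_left h2 hx.le
        _ = ρ q := by field_simp
    have hAN : (0:ℝ) < A ^ (N₀:ℝ) := rpow_pos_of_pos hA0 _
    have hAneg : A ^ (-N₀) = (A ^ (N₀:ℝ))⁻¹ := by
      rw [rpow_neg hA0.le]
    have hden : 0 < ρ x * (C₀⁻¹ * A ^ (-N₀)) := by
      rw [hAneg]; positivity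
    have hstep : s / ρ q ≤ s * C₀ * A ^ (N₀:ℝ) / ρ x := by
      calc s / ρ q ≤ s / (ρ x * (C₀⁻¹ * A ^ (-N₀))) := by
            gcongr
        _ = s * C₀ * A ^ (N₀:ℝ) / ρ x := by
            rw [hAneg]; field_simp
    have hrA : r / ρ x ≤ A := by
      rw [hA]; linarith
    have hAN1 : A ^ (N₀+1) = A ^ (N₀:ℝ) * A := by
      rw [rpow_add hA0, rpow_one]
    have h1A : (1:ℝ) ≤ A ^ (N₀+1) := one_le_rpow hA1 (by linarith)
    have hstep2 : s * C₀ * A ^ (N₀:ℝ) / ρ x ≤ 2*C₀ * A ^ (N₀+1) := by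
      rw [hAN1]
      have hsC : s * C₀ * A ^ (N₀:ℝ) / ρ x = (s / ρ x) * (C₀ * A ^ (N₀:ℝ)) := by ring
      rw [hsC]
      have hsr' : s / ρ x ≤ 2 * (r / ρ x) := by
        rw [div_le_iff₀ hx] at *
        calc s ≤ 2*r := hsr
          _ = 2 * (r / ρ x) * ρ x := by field_simp
      calc (s / ρ x) * (C₀ * A ^ (N₀:ℝ)) ≤ (2 * (r / ρ x)) * (C₀ * A ^ (N₀:ℝ)) := by
            apply mul_le_mul_of_nonneg_right hsr' (by positivity)
        _ ≤ (2 * A) * (C₀ * A ^ (N₀:ℝ)) := by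
            apply mul_le_mul_of_nonneg_right _ (by positivity)
            linarith
        _ = 2*C₀ * (A ^ (N₀:ℝ) * A) := by ring
    have : s / ρ q ≤ 2*C₀ * A ^ (N₀+1) := hstep.trans hstep2
    calc 1 + s / ρ q ≤ A ^ (N₀+1) + 2*C₀ * A ^ (N₀+1) := by linarith
      _ = (1 + 2*C₀) * A ^ (N₀+1) := by ring
  -- cancellation helper
  have cancel : ∀ (A t z : ℝ), 0 < A → A ^ (-t) * (A ^ t * z) = z := by
    intro A t z hA
    rw [← mul_assoc, ← rpow_add hA, neg_add_cancel, rpow_zero, one_mul]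
  constructor
  · rintro ⟨θ, hθ, C, hC, hA1⟩
    refine ⟨(N₀+1)*θ, by positivity, 2^n * (1+2*C₀)^θ * C, by positivity, ?_⟩
    obtain ⟨S, Scount, Sdense⟩ := TopologicalSpace.exists_countable_dense (EuclideanSpace ℝ (Fin d))
    have null : ∀ᵐ x : EuclideanSpace ℝ (Fin d) ∂volume, ∀ q ∈ S, ∀ s : ℚ,
        x ∈ ball q (s:ℝ) → essInf w (volume.restrict (ball q (s:ℝ))) ≤ w x := by
      rw [ae_ball_iff Scount]
      intro q hq
      rw [ae_all_iff]
      intro s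
      rw [← ae_restrict_iff' measurableSet_ball]
      exact aux_essInf_le hw
    filter_upwards [null] with x hx
    intro r hr
    obtain ⟨q, hq_ball, hqS⟩ := Metric.dense_iff.mp Sdense x (r/2) (by positivity)
    obtain ⟨s, hs1, hs2⟩ := exists_rat_btwn (show (3/2)*r < 2*r by linarith)
    have hs0 : (0:ℝ) < (s:ℝ) := lt_trans (by linarith) hs1
    have hdxq : dist x q < r/2 := by
      rw [mem_ball] at hq_ball; rw [dist_comm]; exact hq_ball
    have hsub : ball x r ⊆ ball q (s:ℝ) := by
      intro y hy
      rw [mem_ball] at *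
      calc dist y q ≤ dist y x + dist x q := dist_triangle y x q
        _ < r + r/2 := by linarith
        _ < (s:ℝ) := by linarith
    have hxmem : x ∈ ball q (s:ℝ) := by
      rw [mem_ball]; linarith
    have hEinf : essInf w (volume.restrict (ball q (s:ℝ))) ≤ w x := hx q hqS s hxmem
    have havg := avg_le x q r s hr hs0 hs2.le hsub
    have hA := hA1 q s hs0
    have hk := key x q r (s:ℝ) hr (by linarith) hs0 hs2.le
    set A := 1 + r / ρ x with hAdef
    have hA1' : (1:ℝ) ≤ A := hApos x r hr
    have hA0 : (0:ℝ) < A := by linarith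
    have hq1 : (1:ℝ) ≤ 1 + (s:ℝ) / ρ q := hApos q s hs0
    have hpow : (1 + (s:ℝ) / ρ q) ^ θ ≤ (1+2*C₀)^θ * A ^ ((N₀+1)*θ) := by
      calc (1 + (s:ℝ) / ρ q) ^ θ ≤ ((1 + 2*C₀) * A ^ (N₀+1)) ^ θ :=
            rpow_le_rpow (by linarith) hk hθ.le
        _ = (1+2*C₀)^θ * (A ^ (N₀+1)) ^ θ := mul_rpow (by linarith) (by positivity)
        _ = (1+2*C₀)^θ * A ^ ((N₀+1)*θ) := by rw [← rpow_mul hA0.le]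
    have hchain : (volume (ball x r)).toReal⁻¹ * ∫ y in ball x r, w y ≤
        (2^n * (1+2*C₀)^θ * C) * (A ^ ((N₀+1)*θ) * w x) := by
      have hwx : 0 ≤ w x := hw x
      calc (volume (ball x r)).toReal⁻¹ * ∫ y in ball x r, w y
          ≤ 2^n * ((volume (ball q (s:ℝ))).toReal⁻¹ * ∫ y in ball q (s:ℝ), w y) := havg
        _ ≤ 2^n * (C * (1 + (s:ℝ) / ρ q) ^ θ * essInf w (volume.restrict (ball q (s:ℝ)))) := by
            apply mul_le_mul_of_nonneg_left hA (by positivity)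
        _ ≤ 2^n * (C * (1 + (s:ℝ) / ρ q) ^ θ * w x) := by
            apply mul_le_mul_of_nonneg_left _ (by positivity)
            apply mul_le_mul_of_nonneg_left hEinf (by positivity)
        _ ≤ 2^n * (C * ((1+2*C₀)^θ * A ^ ((N₀+1)*θ)) * w x) := by
            apply mul_le_mul_of_nonneg_left _ (by positivity)
            apply mul_le_mul_of_nonneg_right _ hwx
            apply mul_le_mul_of_nonneg_left hpow hC.le
        _ = (2^n * (1+2*C₀)^θ * C) * (A ^ ((N₀+1)*θ) * w x) := by ring
    have hfin := mul_le_mul_of_nonneg_left hchain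
      (rpow_nonneg hA0.le (-((N₀+1)*θ)))
    rw [show (2^n * (1+2*C₀)^θ * C) * (A ^ ((N₀+1)*θ) * w x)
        = A ^ ((N₀+1)*θ) * ((2^n * (1+2*C₀)^θ * C) * w x) by ring] at hfin
    rw [cancel A ((N₀+1)*θ) _ hA0] at hfin
    exact hfin
  · rintro ⟨θ, hθ, C, hC, hM⟩
    refine ⟨(N₀+1)*θ, by positivity, 2^n * (1+2*C₀)^θ * C, by positivity, ?_⟩
    intro x₀ r hr
    set A := 1 + r / ρ x₀ with hAdef
    have hA1' : (1:ℝ) ≤ A := hApos x₀ r hr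
    have hA0 : (0:ℝ) < A := by linarith
    set K := (2^n * (1+2*C₀)^θ * C) * A ^ ((N₀+1)*θ) with hK
    have hKpos : 0 < K := by
      have : (0:ℝ) < A ^ ((N₀+1)*θ) := rpow_pos_of_pos hA0 _
      positivity
    set avg := (volume (ball x₀ r)).toReal⁻¹ * ∫ x in ball x₀ r, w x with havgdef
    have hμne : volume.restrict (ball x₀ r) ≠ 0 := by
      simp only [ne_eq, Measure.restrict_eq_zero]
      exact (measure_ball_pos volume x₀ hr).ne'
    have hae : ∀ᵐ x ∂(volume.restrict (ball x₀ r)), avg / K ≤ w x := by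
      have hM' : ∀ᵐ x ∂(volume.restrict (ball x₀ r)), ∀ r' : ℝ, 0 < r' →
          (1 + r' / ρ x) ^ (-θ) *
            ((volume (ball x r')).toReal⁻¹ * ∫ y in ball x r', w y) ≤ C * w x :=
        ae_restrict_of_ae hM
      filter_upwards [hM', ae_restrict_mem measurableSet_ball] with x hMx hxball
      rw [div_le_iff₀ hKpos]
      have hdx : dist x₀ x < r := by rw [mem_ball] at hxball; rw [dist_comm]; exact hxball
      have hsub : ball x₀ r ⊆ ball x (2*r) := by
        intro y hy
        rw [mem_ball] at *
        calc dist y x ≤ dist y x₀ + dist x₀ x := dist_triangle y x₀ x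
          _ < r + r := by linarith
          _ = 2*r := by ring
      have havg := avg_le x₀ x r (2*r) hr (by linarith) le_rfl hsub
      have hB1 : (1:ℝ) ≤ 1 + 2*r / ρ x := hApos x (2*r) (by linarith)
      have hB0 : (0:ℝ) < 1 + 2*r / ρ x := by linarith
      have hMxr := hMx (2*r) (by linarith)
      have hmul' : (volume (ball x (2*r))).toReal⁻¹ * ∫ y in ball x (2*r), w y ≤
          (1 + 2*r / ρ x) ^ θ * (C * w x) := by
        calc (volume (ball x (2*r))).toReal⁻¹ * ∫ y in ball x (2*r), w y
            = (1 + 2*r / ρ x) ^ (-(-θ)) * ((1 + 2*r / ρ x) ^ (-θ) *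
              ((volume (ball x (2*r))).toReal⁻¹ * ∫ y in ball x (2*r), w y)) := by
              rw [cancel _ (-θ) _ hB0]
          _ = (1 + 2*r / ρ x) ^ θ * ((1 + 2*r / ρ x) ^ (-θ) *
              ((volume (ball x (2*r))).toReal⁻¹ * ∫ y in ball x (2*r), w y)) := by
              rw [neg_neg]
          _ ≤ (1 + 2*r / ρ x) ^ θ * (C * w x) := by
              apply mul_le_mul_of_nonneg_left hMxr (by positivity)
      have hk := key x₀ x r (2*r) hr hdx.le (by linarith) le_rfl
      have hpow : (1 + 2*r / ρ x) ^ θ ≤ (1+2*C₀)^θ * A ^ ((N₀+1)*θ) := by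
        calc (1 + 2*r / ρ x) ^ θ ≤ ((1 + 2*C₀) * A ^ (N₀+1)) ^ θ :=
              rpow_le_rpow (by linarith) hk hθ.le
          _ = (1+2*C₀)^θ * (A ^ (N₀+1)) ^ θ := mul_rpow (by linarith) (by positivity)
          _ = (1+2*C₀)^θ * A ^ ((N₀+1)*θ) := by rw [← rpow_mul hA0.le]
      calc avg ≤ 2^n * ((volume (ball x (2*r))).toReal⁻¹ * ∫ y in ball x (2*r), w y) := havg
        _ ≤ 2^n * ((1 + 2*r / ρ x) ^ θ * (C * w x)) := by
            apply mul_le_mul_of_nonneg_left hmul' (by positivity)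
        _ ≤ 2^n * ((1+2*C₀)^θ * A ^ ((N₀+1)*θ) * (C * w x)) := by
            apply mul_le_mul_of_nonneg_left _ (by positivity)
            apply mul_le_mul_of_nonneg_right hpow (mul_nonneg hC.le (hw x))
        _ = w x * K := by rw [hK]; ring
    have := aux_le_essInf hμne hae
    rw [div_le_iff₀ hKpos] at this
    calc avg ≤ essInf w (volume.restrict (ball x₀ r)) * K := this
      _ = (2^n * (1+2*C₀)^θ * C) * A ^ ((N₀+1)*θ) * essInf w (volume.restrict (ball x₀ r)) := by
          rw [hK]; ring
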